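/- For even q ≥ 2 and even k_1 with 2 ≤ k_1 < q: Σ_{i=1}^{(q−k_1)/2} Σ_{k_1 < k_1' < ⋯ < k_i' = q, all even} C(q−k_1, q−k_1') C(q−k_1', q−k_2') ⋯ C(q−k_{i−1}', q−k_i') · I_{k_1'−k_1} ⋯ I_{k_i'−k_{i−1}'} · (−1)^i = I_{q−k_1} · (−1)^{(q−k_1)/2}. -/
import Mathlib


open Finset

/-- `pairCount m = m! / (2^(m/2) (m/2)!)`, for `m` even. -/
noncomputable def pairCount (m : ℕ) : ℚ :=
  (Nat.factorial m : ℚ) / (2 ^ (m / 2) * Nat.factorial (m / 2))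

open scoped Classical

/-- The chain weight appearing in the theorem. -/
noncomputable def cW (q i : ℕ) (k : Fin (i + 1) → Fin (q + 1)) : ℚ :=
  (-1 : ℚ) ^ i *
    ∏ s : Fin i,
      (Nat.choose (q - (k s.castSucc : ℕ)) (q - (k s.succ : ℕ)) : ℚ) *
        pairCount ((k s.succ : ℕ) - (k s.castSucc : ℕ))

/-- Chains of length `i` from `a` to `q` inside `Fin (q+1)`. -/
noncomputable def chains (q i a : ℕ) : Finset (Fin (i + 1) → Fin (q + 1)) :=
  Finset.univ.filter
    (fun k : Fin (i + 1) → Fin (q + 1) =>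
      (k 0 : ℕ) = a ∧ (k (Fin.last i) : ℕ) = q ∧ StrictMono k ∧ ∀ s, Even (k s : ℕ))

noncomputable def B (q a : ℕ) : ℚ := ∑ i ∈ Finset.Icc 1 q, ∑ k ∈ chains q i a, cW q i k

lemma even_succ_le {a b : ℕ} (ha : Even a) (hb : Even b) (h : a < b) : a + 2 ≤ b := by
  rcases ha with ⟨x, rfl⟩; rcases hb with ⟨y, rfl⟩; omega

lemma even_chain_ge : ∀ (i : ℕ) (f : Fin (i + 1) → ℕ), StrictMono f → (∀ s, Even (f s)) →
    f 0 + 2 * i ≤ f (Fin.last i) := by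
  intro i
  induction i with
  | zero => intro f _ _; simp [Fin.last]
  | succ n ih =>
    intro f hm he
    have h1 : StrictMono (f ∘ Fin.succ) := hm.comp Fin.strictMono_succ
    have h2 := ih (f ∘ Fin.succ) h1 (fun s => he s.succ)
    have h3 : f 0 + 2 ≤ f 1 := even_succ_le (he 0) (he 1) (hm (by
      simp [Fin.lt_def]))
    have h4 : (f ∘ Fin.succ) (Fin.last n) = f (Fin.last (n + 1)) := by
      simp [Fin.succ_last]
    have h5 : (f ∘ Fin.succ) 0 = f 1 := rfl
    omega


lemma chain_bound {q i a : ℕ} {k : Fin (i + 1) → Fin (q + 1)} (hk : k ∈ chains q i a) :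
    a + 2 * i ≤ q := by
  obtain ⟨h0, hl, hm, he⟩ := (Finset.mem_filter.mp hk).2
  have h := even_chain_ge i (fun s => (k s : ℕ)) (fun s t hst => hm hst) he
  simp only [h0, hl] at h
  omega

lemma chains_empty_sum {q i a : ℕ} (h : q < a + 2 * i) :
    ∑ k ∈ chains q i a, cW q i k = 0 := by
  apply Finset.sum_eq_zero
  intro k hk
  exact absurd (chain_bound hk) (by omega)

lemma sum_chains_one {q a : ℕ} (haq : a < q) (hae : Even a) (hqe : Even q) :
    ∑ k ∈ chains q 1 a, cW q 1 k = -pairCount (q - a) := by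
  have ha1 : a < q + 1 := by omega
  have hset : chains q 1 a = {![⟨a, ha1⟩, Fin.last q]} := by
    apply Finset.eq_singleton_iff_unique_mem.mpr
    constructor
    · simp only [chains, Finset.mem_filter, Finset.mem_univ, true_and]
      refine ⟨rfl, rfl, ?_, ?_⟩
      · refine StrictMono.vecCons strictMono_vecEmpty ?_
        simp [Fin.lt_def, haq]
      · intro s
        fin_cases s
        · simpa using hae
        · simpa using hqe
    · intro k hk
      simp only [chains, Finset.mem_filter, Finset.mem_univ, true_and] at hk
      obtain ⟨h0, h1, _, _⟩ := hk
      funext s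
      fin_cases s
      · exact Fin.ext h0
      · exact Fin.ext h1
  rw [hset, Finset.sum_singleton]
  simp [cW, Fin.prod_univ_one]

lemma cW_succ {q j : ℕ} (k : Fin (j + 2) → Fin (q + 1)) :
    cW q (j + 1) k = (-1 : ℚ) * (Nat.choose (q - (k 0 : ℕ)) (q - (k 1 : ℕ)) : ℚ) *
      pairCount ((k 1 : ℕ) - (k 0 : ℕ)) * cW q j (fun s => k s.succ) := by
  unfold cW
  rw [Fin.prod_univ_succ]
  simp only [Fin.castSucc_zero, Fin.succ_zero_eq_one, Fin.succ_castSucc, pow_succ]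
  ring

lemma sum_chains_succ {q a j : ℕ} (hj : 1 ≤ j) (hae : Even a) :
    ∑ k ∈ chains q (j + 1) a, cW q (j + 1) k =
      ∑ m ∈ (Finset.Ioo a q).filter (fun m => Even m),
        (-1 : ℚ) * (Nat.choose (q - a) (q - m) : ℚ) * pairCount (m - a) *
          ∑ c ∈ chains q j m, cW q j c := by
  simp_rw [Finset.mul_sum]
  rw [← Finset.sum_sigma ((Finset.Ioo a q).filter (fun m => Even m)) (fun m => chains q j m)
    (fun p => (-1 : ℚ) * (Nat.choose (q - a) (q - p.1) : ℚ) * pairCount (p.1 - a) * cW q j p.2)]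
  refine Finset.sum_bij' (fun k _ => ⟨(k 1 : ℕ), fun s => k s.succ⟩)
    (fun p hp => Fin.cons ⟨a, ?_⟩ p.2) ?_ ?_ ?_ ?_ ?_
  · -- a < q + 1
    simp only [Finset.mem_sigma, Finset.mem_filter, Finset.mem_Ioo] at hp
    omega
  · -- maps into sigma
    intro k hk
    simp only [chains, Finset.mem_filter, Finset.mem_univ, true_and] at hk
    obtain ⟨h0, hl, hm, he⟩ := hk
    simp only [Finset.mem_sigma, Finset.mem_filter, Finset.mem_Ioo, chains, Finset.mem_univ,
      true_and]
    have h01 : k 0 < k 1 := hm (by simp [Fin.lt_def])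
    have h1l : k 1 < k (Fin.last (j + 1)) := hm (by simp [Fin.lt_def]; omega)
    refine ⟨⟨⟨?_, ?_⟩, he 1⟩, rfl, ?_, hm.comp Fin.strictMono_succ, fun s => he s.succ⟩
    · rw [← h0]; exact h01
    · simpa [Fin.lt_def, hl] using h1l
    · simpa [Fin.succ_last] using hl
  · -- maps back
    intro p hp
    simp only [Finset.mem_sigma, Finset.mem_filter, Finset.mem_Ioo, chains, Finset.mem_univ,
      true_and] at hp ⊢
    obtain ⟨⟨⟨ham, hmq⟩, hme⟩, h0, hl, hm, he⟩ := hp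
    refine ⟨by simp, ?_, ?_, ?_⟩
    · rw [← Fin.succ_last, Fin.cons_succ]; exact hl
    · refine StrictMono.vecCons hm ?_
      simp only [Fin.lt_def, h0]; exact ham
    · intro s
      cases s using Fin.cases with
      | zero => simpa using hae
      | succ t => simpa using he t
  · -- left inverse
    intro k hk
    simp only [chains, Finset.mem_filter, Finset.mem_univ, true_and] at hk
    funext s
    cases s using Fin.cases with
    | zero => simp only [Fin.cons_zero]; exact (Fin.ext hk.1).symm
    | succ t => simp only [Fin.cons_succ]
  · -- right inverse
    intro p hp
    simp only [Finset.mem_sigma, Finset.mem_filter, Finset.mem_Ioo, chains, Finset.mem_univ,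
      true_and] at hp
    refine Sigma.ext ?_ (heq_of_eq ?_)
    · show ((Fin.cons _ p.2 : Fin (j+2) → Fin (q+1)) 1 : ℕ) = p.1
      have : (1 : Fin (j + 2)) = (0 : Fin (j + 1)).succ := by simp
      rw [this, Fin.cons_succ]; exact hp.2.1
    · funext s; simp only [Fin.cons_succ]
  · -- values agree
    intro k hk
    simp only [chains, Finset.mem_filter, Finset.mem_univ, true_and] at hk
    rw [cW_succ, hk.1]

lemma B_rec {q a : ℕ} (haq : a < q) (hae : Even a) (hqe : Even q) :
    B q a = -pairCount (q - a) +
      ∑ m ∈ (Finset.Ioo a q).filter (fun m => Even m),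
        (-1 : ℚ) * (Nat.choose (q - a) (q - m) : ℚ) * pairCount (m - a) * B q m := by
  have hq1 : 1 ≤ q := by omega
  have hIcc : Finset.Icc 1 q = insert 1 (Finset.Icc 2 q) := by
    ext x; simp [Finset.mem_Icc, Finset.mem_insert]; omega
  rw [B, hIcc, Finset.sum_insert (by simp), sum_chains_one haq hae hqe]
  congr 1
  have hre : ∑ i ∈ Finset.Icc 2 q, ∑ k ∈ chains q i a, cW q i k
      = ∑ j ∈ Finset.Icc 1 (q - 1), ∑ k ∈ chains q (j + 1) a, cW q (j + 1) k := by
    refine Finset.sum_nbij' (fun i => i - 1) (fun j => j + 1) ?_ ?_ ?_ ?_ ?_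
    · intro i hi; simp only [Finset.mem_Icc] at hi ⊢; omega
    · intro j hj; simp only [Finset.mem_Icc] at hj ⊢; omega
    · intro i hi; simp only [Finset.mem_Icc] at hi; show i - 1 + 1 = i; omega
    · intro j hj; simp only [Finset.mem_Icc] at hj; show j + 1 - 1 = j; omega
    · intro i hi; simp only [Finset.mem_Icc] at hi
      have : i - 1 + 1 = i := by omega
      rw [this]
  rw [hre]
  have hstep : ∀ j ∈ Finset.Icc 1 (q - 1),
      ∑ k ∈ chains q (j + 1) a, cW q (j + 1) k =
        ∑ m ∈ (Finset.Ioo a q).filter (fun m => Even m),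
          (-1 : ℚ) * (Nat.choose (q - a) (q - m) : ℚ) * pairCount (m - a) *
            ∑ c ∈ chains q j m, cW q j c := by
    intro j hj
    simp only [Finset.mem_Icc] at hj
    exact sum_chains_succ hj.1 hae
  rw [Finset.sum_congr rfl hstep, Finset.sum_comm]
  refine Finset.sum_congr rfl ?_
  intro m hm
  simp only [Finset.mem_filter, Finset.mem_Ioo] at hm
  rw [← Finset.mul_sum]
  congr 1
  have hIcc2 : Finset.Icc 1 q = insert q (Finset.Icc 1 (q - 1)) := by
    ext x; simp [Finset.mem_Icc, Finset.mem_insert]; omega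
  rw [B, hIcc2, Finset.sum_insert (by simp [Finset.mem_Icc]; omega),
    chains_empty_sum (by omega), zero_add]

lemma pc_conv {n j : ℕ} (hj : j ≤ n) :
    (Nat.choose (2 * n) (2 * j) : ℚ) * pairCount (2 * j) * pairCount (2 * n - 2 * j) =
      pairCount (2 * n) * (Nat.choose n j : ℚ) := by
  obtain ⟨d, rfl⟩ := Nat.exists_eq_add_of_le hj
  have e1 : 2 * (j + d) - 2 * j = 2 * d := by omega
  have e2 : (2 * j) / 2 = j := by omega
  have e3 : (2 * d) / 2 = d := by omega
  have e4 : (2 * (j + d)) / 2 = j + d := by omega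
  rw [Nat.cast_choose ℚ (by omega : 2 * j ≤ 2 * (j + d)),
    Nat.cast_choose ℚ (by omega : j ≤ j + d), e1, pairCount, pairCount, pairCount,
    e2, e3, e4]
  have h1 : ((2 * j).factorial : ℚ) ≠ 0 := by positivity
  have h2 : ((2 * d).factorial : ℚ) ≠ 0 := by positivity
  have h3 : (j.factorial : ℚ) ≠ 0 := by positivity
  have h4 : (d.factorial : ℚ) ≠ 0 := by positivity
  have h5 : ((j + d).factorial : ℚ) ≠ 0 := by positivity
  have h6 : (j + d) - j = d := by omega
  rw [h6, pow_add]
  field_simp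

lemma alt_sum {n : ℕ} (hn : 1 ≤ n) :
    ∑ t ∈ Finset.range (n + 1), (Nat.choose n t : ℚ) * (-1) ^ (n - t) = 0 := by
  have h := add_pow (1 : ℚ) (-1) n
  rw [show (1 : ℚ) + -1 = 0 by ring, zero_pow (by omega : n ≠ 0)] at h
  simp only [one_pow, one_mul] at h
  calc ∑ t ∈ Finset.range (n + 1), (Nat.choose n t : ℚ) * (-1) ^ (n - t)
      = ∑ t ∈ Finset.range (n + 1), (-1 : ℚ) ^ (n - t) * (Nat.choose n t : ℚ) := by
        exact Finset.sum_congr rfl (fun t _ => mul_comm _ _)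
    _ = 0 := h.symm

lemma conv_zero {n : ℕ} (hn : 1 ≤ n) :
    ∑ r ∈ (Finset.Icc 0 (2 * n)).filter (fun r => Even r),
      (Nat.choose (2 * n) r : ℚ) * pairCount r *
        ((-1 : ℚ) ^ ((2 * n - r) / 2) * pairCount (2 * n - r)) = 0 := by
  have hre : ∑ r ∈ (Finset.Icc 0 (2 * n)).filter (fun r => Even r),
      (Nat.choose (2 * n) r : ℚ) * pairCount r *
        ((-1 : ℚ) ^ ((2 * n - r) / 2) * pairCount (2 * n - r))
      = ∑ t ∈ Finset.range (n + 1),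
      (Nat.choose (2 * n) (2 * t) : ℚ) * pairCount (2 * t) *
        ((-1 : ℚ) ^ (n - t) * pairCount (2 * n - 2 * t)) := by
    refine Finset.sum_nbij' (fun r => r / 2) (fun t => 2 * t) ?_ ?_ ?_ ?_ ?_
    · intro r hr
      simp only [Finset.mem_filter, Finset.mem_Icc] at hr
      simp only [Finset.mem_range]; omega
    · intro t ht
      simp only [Finset.mem_range] at ht
      simp only [Finset.mem_filter, Finset.mem_Icc]
      exact ⟨by omega, even_two_mul t⟩
    · intro r hr
      simp only [Finset.mem_filter, Finset.mem_Icc] at hr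
      obtain ⟨_, x, hx⟩ := hr
      show 2 * (r / 2) = r; omega
    · intro t ht; show 2 * t / 2 = t; omega
    · intro r hr
      simp only [Finset.mem_filter, Finset.mem_Icc] at hr
      obtain ⟨hr1, x, hx⟩ := hr
      have e1 : 2 * (r / 2) = r := by omega
      have e2 : (2 * n - r) / 2 = n - r / 2 := by omega
      rw [e2, e1]
  rw [hre]
  have : ∀ t ∈ Finset.range (n + 1),
      (Nat.choose (2 * n) (2 * t) : ℚ) * pairCount (2 * t) *
        ((-1 : ℚ) ^ (n - t) * pairCount (2 * n - 2 * t))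
      = pairCount (2 * n) * ((Nat.choose n t : ℚ) * (-1) ^ (n - t)) := by
    intro t ht
    simp only [Finset.mem_range] at ht
    have := pc_conv (n := n) (j := t) (by omega)
    linear_combination (-1 : ℚ) ^ (n - t) * this
  rw [Finset.sum_congr rfl this, ← Finset.mul_sum, alt_sum hn, mul_zero]

lemma pairCount_zero : pairCount 0 = 1 := by simp [pairCount]

lemma B_closed {q : ℕ} (hqe : Even q) : ∀ a, Even a → a < q →
    B q a = pairCount (q - a) * (-1 : ℚ) ^ ((q - a) / 2) := by
  suffices H : ∀ p a, Even a → a < q → q - a = p →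
      B q a = pairCount (q - a) * (-1 : ℚ) ^ ((q - a) / 2) by
    intro a h1 h2; exact H (q - a) a h1 h2 rfl
  intro p
  induction p using Nat.strong_induction_on with
  | _ p ih =>
    intro a hae haq hp
    obtain ⟨x, hx⟩ := id hqe
    obtain ⟨y, hy⟩ := id hae
    set pp := q - a with hpdef
    have hppe : ∃ n, pp = 2 * n ∧ 1 ≤ n := ⟨x - y, by omega⟩
    obtain ⟨n, hn, hn1⟩ := hppe
    rw [B_rec haq hae hqe]
    -- rewrite each summand using ih
    have hsum : ∑ m ∈ (Finset.Ioo a q).filter (fun m => Even m),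
        (-1 : ℚ) * (Nat.choose (q - a) (q - m) : ℚ) * pairCount (m - a) * B q m
        = -∑ r ∈ (Finset.Ioo 0 pp).filter (fun r => Even r),
          (Nat.choose (2 * n) r : ℚ) * pairCount r *
            ((-1 : ℚ) ^ ((2 * n - r) / 2) * pairCount (2 * n - r)) := by
      rw [← Finset.sum_neg_distrib]
      refine Finset.sum_nbij' (fun m => m - a) (fun r => a + r) ?_ ?_ ?_ ?_ ?_
      · intro m hm
        simp only [Finset.mem_filter, Finset.mem_Ioo] at hm ⊢
        obtain ⟨⟨h1, h2⟩, h3⟩ := hm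
        obtain ⟨z, hz⟩ := h3
        constructor; constructor <;> omega
        exact ⟨z - y, by omega⟩
      · intro r hr
        simp only [Finset.mem_filter, Finset.mem_Ioo] at hr ⊢
        obtain ⟨⟨h1, h2⟩, z, hz⟩ := hr
        constructor; constructor <;> omega
        exact ⟨y + z, by omega⟩
      · intro m hm
        simp only [Finset.mem_filter, Finset.mem_Ioo] at hm
        show a + (m - a) = m; omega
      · intro r hr
        simp only [Finset.mem_filter, Finset.mem_Ioo] at hr
        show a + r - a = r; omega
      · intro m hm
        simp only [Finset.mem_filter, Finset.mem_Ioo] at hm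
        obtain ⟨⟨h1, h2⟩, hme⟩ := hm
        obtain ⟨z, hz⟩ := hme
        have e1 : 2 * n - (m - a) = q - m := by omega
        have e2 : Nat.choose (2 * n) (m - a) = Nat.choose (q - a) (q - m) := by
          rw [show (2 : ℕ) * n = q - a by omega]
          rw [show q - m = (q - a) - (m - a) by omega]
          exact (Nat.choose_symm (by omega)).symm
        have hBm := ih (q - m) (by omega) m ⟨z, hz⟩ h2 rfl
        rw [e1, e2, hBm]
        ring
    rw [hsum]
    -- now use conv_zero, splitting off r = 0 and r = 2n
    have hsplit : (Finset.Icc 0 (2 * n)).filter (fun r => Even r)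
        = insert 0 (insert (2 * n) ((Finset.Ioo 0 pp).filter (fun r => Even r))) := by
      ext r
      simp only [Finset.mem_filter, Finset.mem_Icc, Finset.mem_insert, Finset.mem_Ioo]
      constructor
      · rintro ⟨⟨-, h2⟩, he⟩
        rcases Nat.eq_zero_or_pos r with h | h
        · left; exact h
        · rcases eq_or_lt_of_le h2 with h' | h'
          · right; left; exact h'
          · right; right; exact ⟨⟨by omega, by omega⟩, he⟩
      · rintro (rfl | rfl | ⟨⟨h1, h2⟩, he⟩)
        · exact ⟨⟨le_rfl, by omega⟩, Even.zero⟩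
        · exact ⟨⟨by omega, le_rfl⟩, even_two_mul n⟩
        · exact ⟨⟨by omega, by omega⟩, he⟩
    have hz := conv_zero hn1
    rw [hsplit, Finset.sum_insert, Finset.sum_insert] at hz
    · -- hz : F 0 + (F (2n) + rest) = 0
      have f0 : (Nat.choose (2 * n) 0 : ℚ) * pairCount 0 *
          ((-1 : ℚ) ^ ((2 * n - 0) / 2) * pairCount (2 * n - 0))
          = (-1 : ℚ) ^ n * pairCount (2 * n) := by
        simp [pairCount_zero, Nat.mul_div_cancel_left]
      have fp : (Nat.choose (2 * n) (2 * n) : ℚ) * pairCount (2 * n) *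
          ((-1 : ℚ) ^ ((2 * n - 2 * n) / 2) * pairCount (2 * n - 2 * n))
          = pairCount (2 * n) := by
        simp [pairCount_zero]
      rw [f0, fp] at hz
      rw [show pp = 2 * n from hn] at hz
      simp only [show pp = 2 * n from hn, show 2 * n / 2 = n from by omega]
      have hpc : pairCount (q - a) = pairCount (2 * n) := by
        rw [show q - a = 2 * n from hn]
      linarith [hz, hpc]
    · simp only [Finset.mem_filter, Finset.mem_Ioo]
      intro h; omega
    · simp only [Finset.mem_insert, Finset.mem_filter, Finset.mem_Ioo]
      omega

open scoped Classical in
/-- For even `q ≥ 2` and even `k₁` with `2 ≤ k₁ < q`: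
`Σ_{i=1}^{(q-k₁)/2} Σ_{k₁ < k'₁ < ⋯ < k'ᵢ = q, even} C(q-k₁,q-k'₁)⋯C(q-k'_{i-1},q-k'ᵢ)
I_{k'₁-k₁} ⋯ I_{k'ᵢ-k'_{i-1}} (-1)^i = I_{q-k₁} (-1)^{(q-k₁)/2}`. -/
theorem stmt17 (q k₁ : ℕ) (hq2 : 2 ≤ q) (hqe : Even q)
    (hk₁e : Even k₁) (hk₁2 : 2 ≤ k₁) (hk₁q : k₁ < q) :
    ∑ i ∈ Finset.Icc 1 ((q - k₁) / 2),
      ∑ k ∈ Finset.univ.filter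
          (fun k : Fin (i + 1) → Fin (q + 1) =>
            (k 0 : ℕ) = k₁ ∧ (k (Fin.last i) : ℕ) = q ∧ StrictMono k ∧
              ∀ s, Even (k s : ℕ)),
        (-1 : ℚ) ^ i *
          ∏ s : Fin i,
            (Nat.choose (q - (k s.castSucc : ℕ)) (q - (k s.succ : ℕ)) : ℚ) *
              pairCount ((k s.succ : ℕ) - (k s.castSucc : ℕ))
      = pairCount (q - k₁) * (-1 : ℚ) ^ ((q - k₁) / 2) := by
  have h1 : ∀ i, (∑ k ∈ Finset.univ.filter
          (fun k : Fin (i + 1) → Fin (q + 1) =>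
            (k 0 : ℕ) = k₁ ∧ (k (Fin.last i) : ℕ) = q ∧ StrictMono k ∧
              ∀ s, Even (k s : ℕ)),
        (-1 : ℚ) ^ i *
          ∏ s : Fin i,
            (Nat.choose (q - (k s.castSucc : ℕ)) (q - (k s.succ : ℕ)) : ℚ) *
              pairCount ((k s.succ : ℕ) - (k s.castSucc : ℕ)))
      = ∑ k ∈ chains q i k₁, cW q i k := by
    intro i; rfl
  simp only [h1]
  rw [← B_closed hqe k₁ hk₁e hk₁q]
  unfold B
  apply Finset.sum_subset
  · intro i hi
    simp only [Finset.mem_Icc] at hi ⊢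
    omega
  · intro i hi hni
    simp only [Finset.mem_Icc] at hi hni
    exact chains_empty_sum (by omega)
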